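/- arXiv:0903.4101 — 3 statements merged into one kernel-verified Lean document; each statement's English description precedes it below -/
import Mathlib

section
/- Let p, l be positive integers and let w be a word. Suppose w is partitioned into p words (phrases) such that for every k ≥ 1 at most l of the phrases have length exactly k. Then p ≤ sqrt(2 * l * |w|). -/
/-! Remove a longest phrase, of length `m`. All phrases have lengths in `[1, m]` and at most `l` of
them share a length, so `p ≤ l * m`; by induction on the rest,
`p² ≤ (p - 1)² + 2p ≤ 2l(|w| - m) + 2lm`. -/

namespace Multiset

theorem card_le_mul_of_count_le {s : Multiset ℕ} {l m : ℕ} (hs : ∀ a ∈ s, 0 < a ∧ a ≤ m)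
    (hcount : ∀ k, 0 < k → s.count k ≤ l) : card s ≤ l * m := by
  calc card s = ∑ k ∈ Finset.Icc 1 m, s.count k :=
        (sum_count_eq_card fun a ha => Finset.mem_Icc.2 (hs a ha)).symm
    _ ≤ ∑ _k ∈ Finset.Icc 1 m, l :=
        Finset.sum_le_sum fun k hk => hcount k (Finset.mem_Icc.1 hk).1
    _ = l * m := by simp [mul_comm]

theorem sq_card_le_two_mul_mul_sum {s : Multiset ℕ} {l : ℕ} (hpos : ∀ a ∈ s, 0 < a)
    (hcount : ∀ k, 0 < k → s.count k ≤ l) : card s ^ 2 ≤ 2 * l * s.sum := by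
  induction s using strongInductionOn with
  | ih s ih =>
    obtain rfl | hne := eq_or_ne s 0
    · simp
    obtain ⟨m, hm, hmax⟩ := s.toFinset.exists_max_image id (toFinset_nonempty.2 hne)
    obtain ⟨t, rfl⟩ := exists_cons_of_mem (mem_toFinset.1 hm)
    have ht : card t ^ 2 ≤ 2 * l * t.sum :=
      ih t (lt_cons_self t m) (fun a ha => hpos a (mem_cons_of_mem ha))
        fun k hk => (count_le_of_le k (le_cons_self t m)).trans (hcount k hk)
    have hcard : card (m ::ₘ t) ≤ l * m :=
      card_le_mul_of_count_le (fun a ha => ⟨hpos a ha, hmax a (mem_toFinset.2 ha)⟩) hcount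
    rw [card_cons] at hcard ⊢
    rw [sum_cons]
    nlinarith

end Multiset

theorem stmt_1_general {α : Type*} (p l : ℕ)
    (w : List α) (x : List (List α))
    (hlen : x.length = p) (hjoin : w = x.flatten)
    (hne : ∀ xi ∈ x, xi ≠ [])
    (hcount : ∀ k : ℕ, 1 ≤ k → (x.filter (fun xi => xi.length = k)).length ≤ l) :
    (p : ℝ) ≤ Real.sqrt (2 * l * w.length) := by
  set lengths : Multiset ℕ := (x : Multiset (List α)).map List.length
  have hpos : ∀ a ∈ lengths, 0 < a := by
    simpa [lengths, List.length_pos_iff] using hne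
  have hcount' : ∀ k, 0 < k → lengths.count k ≤ l := by
    intro k hk
    rw [Multiset.count_map, Multiset.filter_coe, Multiset.coe_card]
    simpa only [eq_comm] using hcount k hk
  have hsq := Multiset.sq_card_le_two_mul_mul_sum hpos hcount'
  have hcard : Multiset.card lengths = p := by simp [lengths, hlen]
  have hsum : lengths.sum = w.length := by simp [lengths, hjoin, List.length_flatten]
  rw [hcard, hsum] at hsq
  exact Real.le_sqrt_of_sq_le (by exact_mod_cast hsq)

/-- If a word `w` is partitioned into `p` (nonempty) phrases such that
for every `k ≥ 1` at most `l` of the phrases have length exactly `k`, then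
`p ≤ sqrt (2 * l * |w|)`. -/
theorem stmt_1 {α : Type*} (p l : ℕ) (hp : 1 ≤ p) (hl : 1 ≤ l)
    (w : List α) (x : List (List α))
    (hlen : x.length = p) (hjoin : w = x.flatten)
    (hne : ∀ xi ∈ x, xi ≠ [])
    (hcount : ∀ k : ℕ, 1 ≤ k → (x.filter (fun xi => xi.length = k)).length ≤ l) :
    (p : ℝ) ≤ Real.sqrt (2 * l * w.length) :=
  stmt_1_general p l w x hlen hjoin hne hcount
end

section
/- For every ε > 0 there exists N such that for all n ≥ N: n^(5-ε) ≤ Σ_{k=1}^{n} k * min(|Σ|^k, n^(2k/n + 1)) ≤ n^5, where |Σ| ≥ 2 is the alphabet size. -/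
open Finset Filter Real

lemma my_lower (s : ℕ) (hs : 2 ≤ s) (ε : ℝ) (hε : 0 < ε) (hε1 : ε ≤ 1) :
    ∃ N : ℕ, ∀ n : ℕ, N ≤ n →
      (n : ℝ) ^ ((5 : ℝ) - ε)
        ≤ ∑ k ∈ Finset.Icc 1 n,
            (k : ℝ) * min ((s : ℝ) ^ k) ((n : ℝ) ^ (2 * (k : ℝ) / (n : ℝ) + 1)) := by
  set δ : ℝ := ε / 4 with hδdef
  have hδ0 : 0 < δ := by positivity
  have hδ4 : δ ≤ 1/4 := by rw [hδdef]; linarith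
  clear_value δ
  set r : ℝ := (2:ℝ) ^ ((1:ℝ)/2) with hrdef
  have hr1 : 1 < r := by
    rw [hrdef]
    have := Real.one_lt_rpow_iff_of_pos (x := 2) (by norm_num) (y := 1/2)
    rw [this]; norm_num
  clear_value r
  -- three eventual conditions
  have h1 : ∀ᶠ n : ℕ in atTop, (n:ℝ)^(3:ℕ) ≤ r ^ n := by
    have ht := tendsto_pow_const_div_const_pow_of_one_lt 3 hr1
    have := ht.eventually (gt_mem_nhds (zero_lt_one (α := ℝ)))
    filter_upwards [this] with n hn
    have hrpos : (0:ℝ) < r ^ n := pow_pos (by linarith) n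
    rw [div_lt_one hrpos] at hn
    exact hn.le
  have h2 : ∀ᶠ n : ℕ in atTop, (1:ℝ) ≤ ε/8 * (n:ℝ) ^ (ε/2) := by
    have ht : Filter.Tendsto (fun n : ℕ => (n:ℝ) ^ (ε/2)) atTop atTop :=
      (tendsto_rpow_atTop (by positivity)).comp tendsto_natCast_atTop_atTop
    filter_upwards [ht.eventually_ge_atTop (8/ε)] with n hn
    calc (1:ℝ) = ε/8 * (8/ε) := by field_simp
      _ ≤ ε/8 * (n:ℝ)^(ε/2) := by
          apply mul_le_mul_of_nonneg_left hn (by positivity)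
  have h3 : ∀ᶠ n : ℕ in atTop, 1 ≤ n := eventually_ge_atTop 1
  obtain ⟨N, hN⟩ := eventually_atTop.mp ((h1.and h2).and h3)
  refine ⟨N, fun n hn => ?_⟩
  obtain ⟨⟨hn1, hn2⟩, hn3⟩ := hN n hn
  have hnpos : (0:ℝ) < n := by exact_mod_cast hn3
  have hn1' : (1:ℝ) ≤ n := by exact_mod_cast hn3
  -- set up m
  set m : ℕ := n - ⌊δ * n⌋₊ with hmdef
  have hfl : (⌊δ * n⌋₊ : ℝ) ≤ δ * n := Nat.floor_le (by positivity)
  have hfln : ⌊δ * n⌋₊ ≤ n := by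
    have : δ * n ≤ (n:ℝ) := by nlinarith
    calc ⌊δ * n⌋₊ ≤ ⌊(n:ℝ)⌋₊ := Nat.floor_mono this
      _ = n := Nat.floor_natCast n
  have hmcast : (m:ℝ) = (n:ℝ) - ⌊δ * n⌋₊ := by
    rw [hmdef, Nat.cast_sub hfln]
  have hmlb : (1 - δ) * n ≤ (m:ℝ) := by rw [hmcast]; nlinarith
  have hm1 : 1 ≤ m := by
    have h0 : (0:ℝ) < m := by nlinarith
    exact_mod_cast h0
  have hmn : m ≤ n := Nat.sub_le _ _
  -- core estimate on each term
  set c : ℝ := ((n:ℝ)/2) * (n:ℝ) ^ ((3:ℝ) - 2*δ) with hcdef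
  have hc0 : 0 ≤ c := by
    rw [hcdef]; positivity
  clear_value c
  have hterm : ∀ k ∈ Finset.Icc m n, c ≤
      (k : ℝ) * min ((s : ℝ) ^ k) ((n : ℝ) ^ (2 * (k : ℝ) / (n : ℝ) + 1)) := by
    intro k hk
    obtain ⟨hkm, hkn⟩ := Finset.mem_Icc.mp hk
    have hkm' : (m:ℝ) ≤ k := by exact_mod_cast hkm
    have hkhalf : (n:ℝ)/2 ≤ k := by nlinarith
    have hmin : (n:ℝ) ^ ((3:ℝ) - 2*δ) ≤
        min ((s : ℝ) ^ k) ((n : ℝ) ^ (2 * (k : ℝ) / (n : ℝ) + 1)) := by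
      apply le_min
      · -- s^k ≥ 2^k = 2^(k:ℝ) ≥ 2^(n/2) = r^n ≥ n^3 ≥ n^(3-2δ)
        have e1 : (n:ℝ) ^ ((3:ℝ) - 2*δ) ≤ (n:ℝ) ^ ((3:ℕ):ℝ) :=
          Real.rpow_le_rpow_of_exponent_le hn1' (by push_cast; nlinarith)
        rw [Real.rpow_natCast] at e1
        have e2 : r ^ n = (2:ℝ) ^ ((n:ℝ)/2) := by
          rw [hrdef, ← Real.rpow_natCast ((2:ℝ) ^ ((1:ℝ)/2)) n,
            ← Real.rpow_mul (by norm_num)]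
          ring_nf
        have e3 : (2:ℝ) ^ ((n:ℝ)/2) ≤ (2:ℝ) ^ ((k:ℝ)) :=
          Real.rpow_le_rpow_of_exponent_le (by norm_num) hkhalf
        have e4 : (2:ℝ) ^ ((k:ℝ)) = (2:ℝ) ^ k := by
          rw [Real.rpow_natCast]
        have e5 : (2:ℝ) ^ k ≤ (s:ℝ) ^ k := by
          apply pow_le_pow_left₀ (by norm_num)
          exact_mod_cast hs
        calc (n:ℝ) ^ ((3:ℝ) - 2*δ) ≤ (n:ℝ)^(3:ℕ) := e1
          _ ≤ r ^ n := hn1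
          _ = (2:ℝ) ^ ((n:ℝ)/2) := e2
          _ ≤ (2:ℝ) ^ ((k:ℝ)) := e3
          _ = (2:ℝ) ^ k := e4
          _ ≤ (s:ℝ) ^ k := e5
      · apply Real.rpow_le_rpow_of_exponent_le hn1'
        have hdiv : 2 * (1-δ) ≤ 2 * (k:ℝ) / n := by
          rw [le_div_iff₀ hnpos]; nlinarith
        linarith
    rw [hcdef]
    have hp1 : (0:ℝ) ≤ (n:ℝ) ^ ((3:ℝ) - 2*δ) := (Real.rpow_pos_of_pos hnpos _).le
    have hp2 : (0:ℝ) ≤ (k:ℝ) := Nat.cast_nonneg k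
    exact mul_le_mul hkhalf hmin hp1 hp2
  -- sum over subset
  have hsub : Finset.Icc m n ⊆ Finset.Icc 1 n := Finset.Icc_subset_Icc hm1 le_rfl
  have hnonneg : ∀ k ∈ Finset.Icc 1 n, k ∉ Finset.Icc m n →
      0 ≤ (k : ℝ) * min ((s : ℝ) ^ k) ((n : ℝ) ^ (2 * (k : ℝ) / (n : ℝ) + 1)) := by
    intro k _ _
    have : (0:ℝ) ≤ min ((s : ℝ) ^ k) ((n : ℝ) ^ (2 * (k : ℝ) / (n : ℝ) + 1)) :=
      le_min (by positivity) (by positivity)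
    positivity
  have hstep1 : ∑ k ∈ Finset.Icc m n,
        (k : ℝ) * min ((s : ℝ) ^ k) ((n : ℝ) ^ (2 * (k : ℝ) / (n : ℝ) + 1))
      ≤ ∑ k ∈ Finset.Icc 1 n,
        (k : ℝ) * min ((s : ℝ) ^ k) ((n : ℝ) ^ (2 * (k : ℝ) / (n : ℝ) + 1)) :=
    Finset.sum_le_sum_of_subset_of_nonneg hsub hnonneg
  have hstep2 : (Finset.Icc m n).card • c ≤ ∑ k ∈ Finset.Icc m n,
        (k : ℝ) * min ((s : ℝ) ^ k) ((n : ℝ) ^ (2 * (k : ℝ) / (n : ℝ) + 1)) :=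
    Finset.card_nsmul_le_sum _ _ _ hterm
  have hcard : δ * n ≤ ((Finset.Icc m n).card : ℝ) := by
    rw [Nat.card_Icc]
    have : n + 1 - m = ⌊δ * n⌋₊ + 1 := by omega
    rw [this]
    push_cast
    have := Nat.lt_floor_add_one (δ * (n:ℝ))
    linarith
  have hfinal : (n:ℝ) ^ ((5:ℝ) - ε) ≤ (δ * n) * c := by
    rw [hcdef]
    have expand : (δ * n) * (((n:ℝ)/2) * (n:ℝ) ^ ((3:ℝ) - 2*δ)) =
        (δ/2) * ((n:ℝ) ^ ((1:ℝ)) * ((n:ℝ) ^ ((1:ℝ)) * (n:ℝ) ^ ((3:ℝ) - 2*δ))) := by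
      rw [Real.rpow_one]; ring
    rw [expand, ← Real.rpow_add hnpos, ← Real.rpow_add hnpos]
    have e6 : (1:ℝ) + (1 + (3 - 2*δ)) = (5 - ε) + ε/2 := by rw [hδdef]; ring
    rw [e6, Real.rpow_add hnpos]
    have : (n:ℝ) ^ ((5:ℝ) - ε) = 1 * (n:ℝ) ^ ((5:ℝ) - ε) := by ring
    nth_rewrite 1 [this]
    calc 1 * (n:ℝ) ^ ((5:ℝ) - ε) ≤ (ε/8 * (n:ℝ)^(ε/2)) * (n:ℝ) ^ ((5:ℝ) - ε) := by
          apply mul_le_mul_of_nonneg_right hn2 (by positivity)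
      _ = δ/2 * ((n:ℝ) ^ ((5:ℝ) - ε) * (n:ℝ)^(ε/2)) := by rw [hδdef]; ring
  refine hfinal.trans (le_trans ?_ (hstep2.trans hstep1))
  rw [nsmul_eq_mul]
  exact mul_le_mul_of_nonneg_right hcard hc0


open Finset Real

lemma my_upper (s : ℕ) (hs : 2 ≤ s) (n : ℕ) :
    ∑ k ∈ Finset.Icc 1 n,
        (k : ℝ) * min ((s : ℝ) ^ k) ((n : ℝ) ^ (2 * (k : ℝ) / (n : ℝ) + 1))
      ≤ (n : ℝ) ^ (5 : ℕ) := by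
  rcases Nat.eq_zero_or_pos n with rfl | hn
  · simp
  have hn1 : (1:ℝ) ≤ n := by exact_mod_cast hn
  have hsum : ∑ k ∈ Finset.Icc 1 n,
        (k : ℝ) * min ((s : ℝ) ^ k) ((n : ℝ) ^ (2 * (k : ℝ) / (n : ℝ) + 1))
      ≤ ∑ _k ∈ Finset.Icc 1 n, (n : ℝ) ^ (4:ℕ) := by
    apply Finset.sum_le_sum
    intro k hk
    obtain ⟨hk1, hkn⟩ := Finset.mem_Icc.mp hk
    have hkn' : (k:ℝ) ≤ n := by exact_mod_cast hkn
    have hminpos : 0 ≤ min ((s : ℝ) ^ k) ((n : ℝ) ^ (2 * (k : ℝ) / (n : ℝ) + 1)) := by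
      apply le_min
      · positivity
      · positivity
    have h1 : min ((s : ℝ) ^ k) ((n : ℝ) ^ (2 * (k : ℝ) / (n : ℝ) + 1)) ≤ (n:ℝ)^(3:ℕ) := by
      refine (min_le_right _ _).trans ?_
      have h2 : (n:ℝ) ^ (2 * (k : ℝ) / (n : ℝ) + 1) ≤ (n:ℝ) ^ ((3:ℕ):ℝ) := by
        apply Real.rpow_le_rpow_of_exponent_le hn1
        have h3 : 2 * (k:ℝ) / n ≤ 2 := by
          rw [div_le_iff₀ (by linarith)]
          linarith
        push_cast
        linarith
      rwa [Real.rpow_natCast] at h2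
    calc (k : ℝ) * min ((s : ℝ) ^ k) ((n : ℝ) ^ (2 * (k : ℝ) / (n : ℝ) + 1))
        ≤ (n:ℝ) * (n:ℝ)^(3:ℕ) := mul_le_mul hkn' h1 hminpos (by linarith)
      _ = (n:ℝ)^(4:ℕ) := by ring
  refine hsum.trans ?_
  rw [Finset.sum_const, Nat.card_Icc]
  simp
  exact le_of_eq (by ring)


/-- For every `ε > 0` there exists `N` such that for all `n ≥ N`,
`n^(5-ε) ≤ ∑_{k=1}^{n} k * min(|Σ|^k, n^(2k/n + 1)) ≤ n^5`, where `|Σ| ≥ 2`. -/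
theorem stmt_3 (s : ℕ) (hs : 2 ≤ s) (ε : ℝ) (hε : 0 < ε) :
    ∃ N : ℕ, ∀ n : ℕ, N ≤ n →
      (n : ℝ) ^ ((5 : ℝ) - ε)
        ≤ ∑ k ∈ Finset.Icc 1 n,
            (k : ℝ) * min ((s : ℝ) ^ k) ((n : ℝ) ^ (2 * (k : ℝ) / (n : ℝ) + 1))
      ∧ ∑ k ∈ Finset.Icc 1 n,
            (k : ℝ) * min ((s : ℝ) ^ k) ((n : ℝ) ^ (2 * (k : ℝ) / (n : ℝ) + 1))
          ≤ (n : ℝ) ^ (5 : ℕ) := by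
  obtain ⟨N, hN⟩ := my_lower s hs (min ε 1) (lt_min hε one_pos) (min_le_right _ _)
  refine ⟨max N 1, fun n hn => ?_⟩
  have hn1 : 1 ≤ n := le_trans (le_max_right _ _) hn
  have hnN : N ≤ n := le_trans (le_max_left _ _) hn
  constructor
  · refine le_trans ?_ (hN n hnN)
    apply Real.rpow_le_rpow_of_exponent_le (by exact_mod_cast hn1)
    have := min_le_left ε 1
    linarith [min_le_left ε 1]
  · exact my_upper s hs n
end

section
/- Suppose a compressor C outputs, on the prefix of length m of the sequence S = y₁·y₁ʳ·y₂·y₂ʳ·… (where |y_j| = k·t_j with j ≤ t_j ≤ jk), at least (T − γ)·|y_j| symbols on each of the two occurrences of y_j for ε'n ≤ j ≤ n−1. Then |C(S[1..m])|/m ≥ (T − γ) − (T − γ)·( n/(2 Σ_{j=1}^n t_j) + t_n/(Σ_{j=1}^n t_j) + (Σ_{j=1}^{ε'n−1} t_j)/(Σ_{j=1}^n t_j) ), where m ≤ nk + 2Σ_{j=1}^{n} k·t_j. -/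
set_option maxHeartbeats 1000000 in
/-- Suppose a compressor outputs, on the length-`m` prefix of
`S = y₁·y₁ʳ·y₂·y₂ʳ·…` (with `|y_j| = k·t_j`, `j ≤ t_j ≤ jk`), at least
`(T−γ)·|y_j|` symbols on each of the two occurrences of `y_j` for
`⌈ε'n⌉ ≤ j ≤ n−1` (so the total output length `c` is at least
`∑_{j=⌈ε'n⌉}^{n-1} 2(T−γ)·k·t_j`), where `m ≤ nk + 2∑_{j=1}^{n} k·t_j`. Then
`c/m ≥ (T−γ) − (T−γ)·( n/(2∑_{j=1}^{n} t_j) + t_n/∑_{j=1}^{n} t_j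
  + (∑_{j=1}^{⌈ε'n⌉−1} t_j)/∑_{j=1}^{n} t_j )`. -/
theorem stmt_17 (k : ℕ) (hk : 2 ≤ k) (ε' γ T : ℝ)
    (hε'0 : 0 < ε') (hε'1 : ε' < 1) (hγ0 : 0 < γ) (hγT : γ < T) (hT : T ≤ 1)
    (t : ℕ → ℕ) (ht : ∀ j : ℕ, 1 ≤ j → j ≤ t j ∧ t j ≤ j * k)
    (n m c : ℕ) (hn : 1 ≤ n) (hm0 : 0 < m)
    (hc : 2 * (T - γ) * (∑ j ∈ Finset.Ico (⌈ε' * (n : ℝ)⌉₊) n, ((k * t j : ℕ) : ℝ))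
            ≤ (c : ℝ))
    (hm : (m : ℝ) ≤ (n : ℝ) * k + 2 * (∑ j ∈ Finset.Icc 1 n, ((k * t j : ℕ) : ℝ))) :
    (T - γ) - (T - γ) *
        ((n : ℝ) / (2 * ∑ j ∈ Finset.Icc 1 n, (t j : ℝ))
          + (t n : ℝ) / (∑ j ∈ Finset.Icc 1 n, (t j : ℝ))
          + (∑ j ∈ Finset.Ico 1 (⌈ε' * (n : ℝ)⌉₊), (t j : ℝ))
              / (∑ j ∈ Finset.Icc 1 n, (t j : ℝ)))
      ≤ (c : ℝ) / (m : ℝ) := by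
  set r : ℕ := ⌈ε' * (n : ℝ)⌉₊ with hr
  have hr1 : 1 ≤ r := by
    rw [hr]
    exact Nat.one_le_iff_ne_zero.mpr (by
      simp [Nat.ceil_eq_zero, not_le]
      positivity)
  have hrn : r ≤ n := by
    rw [hr]
    apply Nat.ceil_le.mpr
    have hn1 : (1 : ℝ) ≤ (n : ℝ) := by exact_mod_cast hn
    nlinarith
  set A : ℝ := ∑ j ∈ Finset.Icc 1 n, (t j : ℝ) with hA
  set B : ℝ := ∑ j ∈ Finset.Ico r n, (t j : ℝ) with hB
  set P : ℝ := ∑ j ∈ Finset.Ico 1 r, (t j : ℝ) with hP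
  clear_value r A B P
  have hTγ : (0 : ℝ) < T - γ := by linarith
  have hn1 : (1 : ℝ) ≤ (n : ℝ) := Nat.one_le_cast.mpr hn
  have htn : (1 : ℝ) ≤ (t n : ℝ) := by
    have := (ht n hn).1
    exact_mod_cast le_trans hn this
  have hBnn : (0 : ℝ) ≤ B := hB ▸ Finset.sum_nonneg fun j _ => by positivity
  have hPnn : (0 : ℝ) ≤ P := hP ▸ Finset.sum_nonneg fun j _ => by positivity
  -- split A = P + B + t n
  have hsplit : A = P + B + (t n : ℝ) := by
    rw [hA, hP, hB, show Finset.Icc 1 n = Finset.Ico 1 (n + 1) by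
      rw [Finset.Ico_add_one_right_eq_Icc]]
    rw [← Finset.sum_Ico_consecutive (fun j => (t j : ℝ)) hr1 (by omega),
      Finset.sum_Ico_succ_top hrn]
    ring
  have hA0 : (0 : ℝ) < A := by
    rw [hsplit]; linarith
  have hBA : B ≤ A := by rw [hsplit]; linarith
  -- rewrite hc and hm
  have hkB : (∑ j ∈ Finset.Ico r n, ((k * t j : ℕ) : ℝ)) = (k : ℝ) * B := by
    rw [hB, Finset.mul_sum]; push_cast; ring
  have hkA : (∑ j ∈ Finset.Icc 1 n, ((k * t j : ℕ) : ℝ)) = (k : ℝ) * A := by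
    rw [hA, Finset.mul_sum]; push_cast; ring
  rw [hkB] at hc
  rw [hkA] at hm
  have hk0 : (0 : ℝ) < (k : ℝ) := by positivity
  have hM : (0 : ℝ) < (k : ℝ) * ((n : ℝ) + 2 * A) := by positivity
  have hm' : (m : ℝ) ≤ (k : ℝ) * ((n : ℝ) + 2 * A) := by
    nlinarith
  have hm0' : (0 : ℝ) < (m : ℝ) := by exact_mod_cast hm0
  have hc0 : (0 : ℝ) ≤ (c : ℝ) := Nat.cast_nonneg c
  -- chain
  have step3 : (c : ℝ) / ((k : ℝ) * ((n : ℝ) + 2 * A)) ≤ (c : ℝ) / (m : ℝ) := by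
    apply div_le_div_of_nonneg_left hc0 hm0' hm'
  have step2 : 2 * (T - γ) * ((k : ℝ) * B) / ((k : ℝ) * ((n : ℝ) + 2 * A))
      ≤ (c : ℝ) / ((k : ℝ) * ((n : ℝ) + 2 * A)) := by
    gcongr
  have heq : 2 * (T - γ) * ((k : ℝ) * B) / ((k : ℝ) * ((n : ℝ) + 2 * A))
      = (T - γ) * (2 * B) / ((n : ℝ) + 2 * A) := by
    rw [mul_comm (k : ℝ) B, ← mul_assoc, mul_div_mul_comm]
    field_simp
  -- LHS equals (T-γ)(2B - n)/(2A)
  have hlhs : (T - γ) - (T - γ) *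
        ((n : ℝ) / (2 * A) + (t n : ℝ) / A + P / A)
      = (T - γ) * (2 * B - (n : ℝ)) / (2 * A) := by
    have htn' : (t n : ℝ) = A - P - B := by linarith
    rw [htn']
    field_simp
    ring
  have key : (T - γ) * (2 * B - (n : ℝ)) / (2 * A)
      ≤ (T - γ) * (2 * B) / ((n : ℝ) + 2 * A) := by
    rw [div_le_div_iff₀ (by positivity) (by positivity)]
    nlinarith [mul_nonneg hTγ.le (mul_nonneg (by positivity : (0:ℝ) ≤ (n:ℝ))
      (by linarith : (0:ℝ) ≤ (n : ℝ) + 2 * A - 2 * B))]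
  calc (T - γ) - (T - γ) * ((n : ℝ) / (2 * A) + (t n : ℝ) / A + P / A)
      = (T - γ) * (2 * B - (n : ℝ)) / (2 * A) := hlhs
    _ ≤ (T - γ) * (2 * B) / ((n : ℝ) + 2 * A) := key
    _ = 2 * (T - γ) * ((k : ℝ) * B) / ((k : ℝ) * ((n : ℝ) + 2 * A)) := heq.symm
    _ ≤ (c : ℝ) / ((k : ℝ) * ((n : ℝ) + 2 * A)) := step2
    _ ≤ (c : ℝ) / (m : ℝ) := step3
end
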